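/- arXiv:2503.01848 — 2 statements merged into one kernel-verified Lean document; each statement's English description precedes it below -/
import Mathlib

section
/- An implicative-ortholattice X is an implicative-orthomodular lattice if and only if x → (x ∧_Q y) = x → y for all x, y ∈ X. -/
/-- A BE algebra: (X, →, 1) with the four BE axioms. -/
class BEAlgebra (X : Type*) where
  imp : X → X → X
  one : X
  be1 : ∀ x : X, imp x x = one
  be2 : ∀ x : X, imp x one = one
  be3 : ∀ x : X, imp one x = x
  be4 : ∀ x y z : X, imp x (imp y z) = imp y (imp x z)

/-- A bounded BE algebra: there is 0 with 0 → x = 1 for all x. -/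
class BoundedBEAlgebra (X : Type*) extends BEAlgebra X where
  zero : X
  bound : ∀ x : X, imp zero x = one

/-- The negation x* = x → 0. -/
def bstar {X : Type*} [BoundedBEAlgebra X] (x : X) : X :=
  BEAlgebra.imp x BoundedBEAlgebra.zero

/-- An involutive BE algebra: x** = x. -/
class InvolutiveBEAlgebra (X : Type*) extends BoundedBEAlgebra X where
  invol : ∀ x : X, bstar (bstar x) = x

/-- An implicative-ortholattice: an implicative involutive BE algebra,
    i.e. (x → y) → x = x. -/
class ImplicativeOrtholattice (X : Type*) extends InvolutiveBEAlgebra X where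
  impl : ∀ x y : X, imp (imp x y) x = x

open BEAlgebra BoundedBEAlgebra

variable {X : Type*}

/-- x ∨_Q y = (x → y) → y. -/
def veeQ [BEAlgebra X] (x y : X) : X := imp (imp x y) y

/-- x ∧_Q y = ((x* → y*) → y*)*. -/
def wedgeQ [InvolutiveBEAlgebra X] (x y : X) : X :=
  bstar (imp (imp (bstar x) (bstar y)) (bstar y))

/-- x ≤_L y iff x = (x → y*)*. -/
def leL [InvolutiveBEAlgebra X] (x y : X) : Prop := x = bstar (imp x (bstar y))

/-- x ≤_Q y iff x = x ∧_Q y. -/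
def leQ [InvolutiveBEAlgebra X] (x y : X) : Prop := x = wedgeQ x y

/-- An implicative-orthomodular lattice: an i-OL with (IOM) x ∧_Q (y → x) = x. -/
class IOML (X : Type*) extends ImplicativeOrtholattice X where
  iom : ∀ x y : X, wedgeQ x (imp y x) = x

section Aux

variable [ImplicativeOrtholattice X]

lemma star_def' (x : X) : bstar x = imp x zero := rfl

/-- x → y* = y → x* -/
lemma swap_star' (x y : X) : imp x (bstar y) = imp y (bstar x) := by
  rw [star_def' y, be4, ← star_def']

/-- contraposition: x → y = y* → x* -/
lemma contra' (x y : X) : imp x y = imp (bstar y) (bstar x) := by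
  have h : imp x (bstar (bstar y)) = imp (bstar y) (bstar x) := swap_star' x (bstar y)
  rwa [InvolutiveBEAlgebra.invol] at h

/-- x* → x = x -/
lemma sstar' (x : X) : imp (bstar x) x = x := by
  have h := ImplicativeOrtholattice.impl x (zero : X)
  rwa [← star_def'] at h

/-- x → x* = x* -/
lemma self_star' (x : X) : imp x (bstar x) = bstar x := by
  have h := sstar' (bstar x)
  rwa [InvolutiveBEAlgebra.invol] at h

/-- x → (x → y) = x → y -/
lemma imp_imp_self' (x y : X) : imp x (imp x y) = imp x y := by
  rw [contra' x y, be4, self_star']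

/-- (y → x) → x* = x* -/
lemma H1' (x y : X) : imp (imp y x) (bstar x) = bstar x := by
  rw [contra' y x]
  exact ImplicativeOrtholattice.impl (bstar x) (bstar y)

end Aux

theorem stmt12 [ImplicativeOrtholattice X] :
    (∀ x y : X, wedgeQ x (imp y x) = x) ↔
      (∀ x y : X, imp x (wedgeQ x y) = imp x y) := by
  constructor
  · intro hA
    -- A2 : (x → (x→y)*) → (x→y)* = x
    have A2 : ∀ x y : X, imp (imp x (bstar (imp x y))) (bstar (imp x y)) = x := by
      intro x y
      have h := hA (bstar x) (bstar y)
      unfold wedgeQ at h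
      rw [InvolutiveBEAlgebra.invol] at h
      rw [show imp (bstar y) (bstar x) = imp x y from (contra' x y).symm] at h
      have h2 := congrArg bstar h
      rwa [InvolutiveBEAlgebra.invol, InvolutiveBEAlgebra.invol] at h2
    -- H2 : ((y→x) → x) → x = y → x
    have H2 : ∀ x y : X, imp (imp (imp y x) x) x = imp y x := by
      intro x y
      have h := A2 (imp y x) (bstar x)
      rw [H1' x y] at h
      rwa [InvolutiveBEAlgebra.invol] at h
    -- A3 : ((y→x) → x) → (y→x)* = x*
    have A3 : ∀ x y : X, imp (imp (imp y x) x) (bstar (imp y x)) = bstar x := by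
      intro x y
      have h := hA x y
      unfold wedgeQ at h
      rw [show imp (bstar x) (bstar (imp y x)) = imp (imp y x) x from (contra' (imp y x) x).symm] at h
      have h2 := congrArg bstar h
      rwa [InvolutiveBEAlgebra.invol] at h2
    -- B' : ((a→b)→b) → a = b → a
    have B' : ∀ a b : X, imp (imp (imp a b) b) a = imp b a := by
      intro a b
      have f1 := A2 a b
      have f2 := H1' b a
      have f3 := H2 b a
      have f4 := A3 b a
      have f5 := be4 (imp a (bstar (imp a b))) b (bstar (imp a b))
      have f6 := be4 (imp a (bstar (imp a b))) (imp (imp a b) b) a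
      have f7 := be4 (imp a (bstar (imp a b))) (imp (imp a b) b) (bstar (imp a b))
      have f8 := be4 (imp (imp (imp a b) b) b) b a
      have f9 := swap_star' (imp (imp (imp a b) b) b) b
      grind
    intro x y
    unfold wedgeQ
    rw [swap_star', B' (bstar x) (bstar y)]
    exact (contra' x y).symm
  · intro hB x y
    set z : X := imp y x with hz
    -- u := x* → y* equals z
    have huz : imp (bstar x) (bstar y) = z := (contra' y x).symm
    -- step (ii): wedgeQ z x* = (z → x)*
    have hii : wedgeQ z (bstar x) = bstar (imp z x) := by
      unfold wedgeQ
      rw [InvolutiveBEAlgebra.invol]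
      have h1 : imp (bstar z) x = z := by
        have h2 : imp (bstar z) x = imp (bstar x) z := by
          have := swap_star' (bstar z) (bstar x)
          rwa [InvolutiveBEAlgebra.invol, InvolutiveBEAlgebra.invol] at this
        rw [h2, ← huz, imp_imp_self', huz]
      rw [h1]
    -- step (iii)-(iv): (z → x) → z* = x*
    have hkey : imp (imp z x) (bstar z) = bstar x := by
      have h := hB z (bstar x)
      rw [hii, swap_star' z (imp z x)] at h
      rw [h, ← huz]
      exact ImplicativeOrtholattice.impl (bstar x) (bstar y)
    -- finish
    unfold wedgeQ
    have hc : imp (bstar x) (bstar z) = imp z x := (contra' z x).symm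
    rw [hc, hkey, InvolutiveBEAlgebra.invol]
end

section
/- In an implicative-orthomodular lattice X, for all a, x ∈ X: φ_a((φ_a x)*) = (a→x)*, i.e., ((x ∧_Q a)*) ∧_Q a = (a→x)*. -/
open BEAlgebra BoundedBEAlgebra

variable {X : Type*}

section Aux

variable [IOML X]

lemma contrap (p q : X) : imp p (bstar q) = imp q (bstar p) := by
  unfold bstar; exact BEAlgebra.be4 p q _

lemma bstar_inj {p q : X} (h : bstar p = bstar q) : p = q := by
  have := congrArg bstar h
  rwa [InvolutiveBEAlgebra.invol, InvolutiveBEAlgebra.invol] at this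

lemma lemA (p q : X) : imp p (imp p q) = imp p q := by
  have h1 := ImplicativeOrtholattice.impl p q
  have h2 := ImplicativeOrtholattice.impl (imp p q) p
  rw [h1] at h2
  exact h2

end Aux

theorem stmt17 [IOML X] (a x : X) :
    wedgeQ (bstar (wedgeQ x a)) a = bstar (imp a x) := by
  set s := imp a x with hs
  set t := imp a (bstar s) with ht
  -- s = x* → a*
  have hsx : imp (bstar x) (bstar a) = s := by
    rw [contrap, InvolutiveBEAlgebra.invol]
  -- t = s → a*
  have hts : imp s (bstar a) = t := by rw [contrap]
  -- IOM instance 1: t → s* = a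
  have H1 : imp t (bstar s) = a := by
    have h := IOML.iom (bstar a) (bstar x)
    rw [hsx] at h
    unfold wedgeQ at h
    rw [InvolutiveBEAlgebra.invol, ← ht] at h
    exact bstar_inj h
  -- hence s → t* = a
  have H1' : imp s (bstar t) = a := by rw [contrap, H1]
  -- IOM instance 2: a → t* = s
  have H2 : imp a (bstar t) = s := by
    have h := IOML.iom (bstar s) a
    rw [← ht] at h
    unfold wedgeQ at h
    rw [InvolutiveBEAlgebra.invol, H1'] at h
    exact bstar_inj h
  -- now compute the goal
  have hm : wedgeQ x a = bstar t := by
    unfold wedgeQ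
    rw [hsx, hts]
  rw [hm, InvolutiveBEAlgebra.invol]
  unfold wedgeQ
  have h1 : imp (bstar t) (bstar a) = t := by
    rw [contrap, InvolutiveBEAlgebra.invol, ht, lemA]
  rw [h1, contrap t a, H2]
end
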